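/- arXiv:1812.11706 — 2 statements merged into one kernel-verified Lean document; each statement's English description precedes it below -/
import Mathlib

section
/- Let A : X × K → L(E,H) be continuous, where X ⊂ H and K ⊂ E are compact, and assume A(u,η) has dense image in H for every (u,η). Then for every ε > 0 there exist M ∈ ℕ, C > 0, and a continuous map R_ε : X × K → L(H,E) such that for all (u,η): the image of R_ε(u,η) lies in the span E_M of the first M basis vectors, ‖R_ε(u,η)‖ ≤ C, and ‖A(u,η) R_ε(u,η) f − f‖_H ≤ ε ‖f‖_V for all f ∈ V. -/
/-!
Compactness of `ι` lets one replace the identity on `ι(V)` by the orthogonal projection `P` onto a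
finite-dimensional subspace `W`, at operator-norm cost `ε / 2`. Writing `P = ∑ᵢ |bᵢ⟩⟨bᵢ|`, density
of the range of `A q` and of `⋃ E_M` gives `S` with range in some `E_M` and `‖A q ∘ S - P‖` small,
and by continuity of `A` the same `S` works near `q`. This condition is convex in `S`, so a
partition of unity on the compact parameter set glues the local choices into a continuous `R`;
compactness makes `M` and the bound on `‖R‖` uniform.
-/

open ContinuousLinearMap InnerProductSpace Submodule Set Filter

theorem Submodule.norm_sub_starProjection_le {𝕜 H : Type*} [RCLike 𝕜] [NormedAddCommGroup H]
    [InnerProductSpace 𝕜 H] (W : Submodule 𝕜 H) [W.HasOrthogonalProjection] (x : H) {w : H}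
    (hw : w ∈ W) : ‖x - W.starProjection x‖ ≤ ‖x - w‖ := by
  rw [starProjection_minimal]
  exact ciInf_le ⟨0, by rintro _ ⟨y, rfl⟩; positivity⟩ (⟨w, hw⟩ : W)

theorem IsCompactOperator.exists_norm_sub_starProjection_comp_le {𝕜 V H : Type*} [RCLike 𝕜]
    [NormedAddCommGroup V] [NormedSpace 𝕜 V] [NormedAddCommGroup H] [InnerProductSpace 𝕜 H]
    {T : V →L[𝕜] H} (hT : IsCompactOperator T) {δ : ℝ} (hδ : 0 < δ) :
    ∃ (W : Submodule 𝕜 H) (_ : FiniteDimensional 𝕜 W), ‖T - W.starProjection ∘L T‖ ≤ δ := by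
  obtain ⟨K, hK, hTK⟩ := hT.image_closedBall_subset_compact 1
  obtain ⟨t, ht, hKt⟩ := Metric.totallyBounded_iff.1 hK.totallyBounded δ hδ
  have : FiniteDimensional 𝕜 (span 𝕜 t) := FiniteDimensional.span_of_finite 𝕜 ht
  refine ⟨span 𝕜 t, inferInstance, opNorm_le_of_unit_norm hδ.le fun x hx => ?_⟩
  obtain ⟨y, hyt, hy⟩ := mem_iUnion₂.1 (hKt (hTK ⟨x, by simp [hx], rfl⟩))
  calc ‖T x - (span 𝕜 t).starProjection (T x)‖
      ≤ ‖T x - y‖ := (span 𝕜 t).norm_sub_starProjection_le _ (subset_span hyt)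
    _ ≤ δ := (mem_ball_iff_norm.1 hy).le

theorem monotone_span_image_setOf_lt {R E : Type*} [Semiring R] [AddCommMonoid E] [Module R E]
    (v : ℕ → E) : Monotone fun M => span R (v '' {j | j < M}) :=
  fun _ _ hMN => span_mono (image_mono fun _ hj => lt_of_lt_of_le hj hMN)

theorem HilbertBasis.dense_iUnion_span_image_lt {𝕜 E : Type*} [RCLike 𝕜] [NormedAddCommGroup E]
    [InnerProductSpace 𝕜 E] (e : HilbertBasis ℕ 𝕜 E) :
    Dense (⋃ M, (span 𝕜 (e '' {j | j < M}) : Set E)) := fun x =>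
  mem_closure_of_tendsto (e.hasSum_repr x).tendsto_sum_nat <| Eventually.of_forall fun N =>
    mem_iUnion.2 ⟨N, sum_mem fun j hj =>
      smul_mem _ _ (subset_span ⟨j, Finset.mem_range.1 hj, rfl⟩)⟩

theorem exists_comp_sub_sum_rankOne_lt {𝕜 ι E F G : Type*} [RCLike 𝕜] [Fintype ι]
    [NormedAddCommGroup E] [NormedSpace 𝕜 E] [NormedAddCommGroup F] [NormedSpace 𝕜 F]
    [NormedAddCommGroup G] [InnerProductSpace 𝕜 G]
    {T : E →L[𝕜] F} (hT : DenseRange T) {D : ℕ → Submodule 𝕜 E} (hD : Monotone D)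
    (hD_dense : Dense (⋃ M, (D M : Set E))) (x : ι → F) (y : ι → G) {κ : ℝ} (hκ : 0 < κ) :
    ∃ (M : ℕ) (S : G →L[𝕜] E), (∀ h, S h ∈ D M) ∧
      ‖T ∘L S - ∑ i, rankOne 𝕜 (x i) (y i)‖ < κ := by
  set c := κ / (∑ i, ‖y i‖ + 1)
  have hc : 0 < c := by positivity
  have hTD : Dense (T '' ⋃ M, (D M : Set E)) := hT.dense_image T.continuous hD_dense
  have hξ : ∀ i, ∃ ξ ∈ ⋃ M, (D M : Set E), ‖T ξ - x i‖ < c := fun i => by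
    obtain ⟨_, ⟨ξ, hξ, rfl⟩, hdist⟩ := hTD.exists_dist_lt (x i) hc
    exact ⟨ξ, hξ, by rwa [dist_comm, dist_eq_norm] at hdist⟩
  choose ξ hξD hξx using hξ
  choose Mi hMi using fun i => mem_iUnion.1 (hξD i)
  refine ⟨Finset.univ.sup Mi, ∑ i, rankOne 𝕜 (ξ i) (y i), fun h => ?_, ?_⟩
  · simp only [sum_apply, rankOne_apply]
    exact sum_mem fun i _ => smul_mem _ _ (hD (Finset.le_sup (Finset.mem_univ i)) (hMi i))
  · have hsub : T ∘L ∑ i, rankOne 𝕜 (ξ i) (y i) - ∑ i, rankOne 𝕜 (x i) (y i)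
        = ∑ i, rankOne 𝕜 (T (ξ i) - x i) (y i) := by
      simp only [comp_finsetSum, comp_rankOne, map_sub, sub_apply,
        Finset.sum_sub_distrib]
    calc ‖T ∘L ∑ i, rankOne 𝕜 (ξ i) (y i) - ∑ i, rankOne 𝕜 (x i) (y i)‖
        ≤ ∑ i, ‖T (ξ i) - x i‖ * ‖y i‖ := by
          rw [hsub]; exact (norm_sum_le _ _).trans_eq (by simp only [norm_rankOne])
      _ ≤ ∑ i, c * ‖y i‖ := by gcongr with i; exact (hξx i).le
      _ < κ := by
          rw [← Finset.mul_sum, div_mul_eq_mul_div, div_lt_iff₀ (by positivity)]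
          gcongr; linarith

section Gluing

variable {Z E F G : Type*} [TopologicalSpace Z]
  [NormedAddCommGroup E] [NormedSpace ℝ E] [NormedAddCommGroup F] [NormedSpace ℝ F]
  [NormedAddCommGroup G] [NormedSpace ℝ G]
  {T : Z → E →L[ℝ] F} (P : G →L[ℝ] F) {D : ℕ → Submodule ℝ E} {κ : ℝ}

theorem isOpen_setOf_norm_comp_sub_lt (hT : Continuous T) (S : G →L[ℝ] E) :
    IsOpen {z | ‖T z ∘L S - P‖ < κ} :=
  isOpen_lt ((hT.clm_comp continuous_const).sub continuous_const).norm continuous_const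

theorem convex_setOf_forall_mem_and_norm_comp_sub_lt (T₀ : E →L[ℝ] F) (U : Submodule ℝ E) :
    Convex ℝ {S : G →L[ℝ] E | (∀ h, S h ∈ U) ∧ ‖T₀ ∘L S - P‖ < κ} := by
  have hball : {S : G →L[ℝ] E | ‖T₀ ∘L S - P‖ < κ}
      = (compL ℝ G E F T₀).toLinearMap ⁻¹' Metric.ball P κ := by
    ext S; simp [dist_eq_norm]
  have hmem : {S : G →L[ℝ] E | ∀ h, S h ∈ U} = ⋂ h, (apply ℝ E h).toLinearMap ⁻¹' U := by
    ext S; simp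
  rw [ofPred_and, hmem, hball]
  exact (convex_iInter fun h => U.convex.linear_preimage _).inter
    ((convex_ball P κ).linear_preimage _)

theorem exists_index_forall_exists_comp_sub_lt [CompactSpace Z] (hT : Continuous T)
    (hD : Monotone D) (hloc : ∀ z, ∃ M, ∃ S : G →L[ℝ] E, (∀ h, S h ∈ D M) ∧ ‖T z ∘L S - P‖ < κ) :
    ∃ M, ∀ z, ∃ S : G →L[ℝ] E, (∀ h, S h ∈ D M) ∧ ‖T z ∘L S - P‖ < κ := by
  set U : ℕ → Set Z := fun M =>
    ⋃ (S : G →L[ℝ] E) (_ : ∀ h, S h ∈ D M), {z | ‖T z ∘L S - P‖ < κ}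
  have hU_mono : Monotone U := fun M N hMN =>
    iUnion₂_mono' fun S hS => ⟨S, fun h => hD hMN (hS h), subset_rfl⟩
  have hU_cover : univ ⊆ ⋃ M, U M := fun z _ => by
    obtain ⟨M, S, hS, hz⟩ := hloc z
    exact mem_iUnion.2 ⟨M, mem_iUnion₂.2 ⟨S, hS, hz⟩⟩
  obtain ⟨M, hM⟩ := isCompact_univ.elim_directed_cover U
    (fun M => isOpen_iUnion fun S => isOpen_iUnion fun _ => isOpen_setOf_norm_comp_sub_lt P hT S)
    hU_cover hU_mono.directed_le
  exact ⟨M, fun z => by simpa [U] using hM (mem_univ z)⟩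

theorem exists_continuous_forall_comp_sub_lt [NormalSpace Z] [ParacompactSpace Z]
    (hT : Continuous T) {M : ℕ}
    (hloc : ∀ z, ∃ S : G →L[ℝ] E, (∀ h, S h ∈ D M) ∧ ‖T z ∘L S - P‖ < κ) :
    ∃ R : C(Z, G →L[ℝ] E), ∀ z, (∀ h, R z h ∈ D M) ∧ ‖T z ∘L R z - P‖ < κ := by
  refine exists_continuous_forall_mem_convex_of_local_const
    (fun z => convex_setOf_forall_mem_and_norm_comp_sub_lt P (T z) (D M)) fun z => ?_
  obtain ⟨S, hS, hz⟩ := hloc z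
  exact ⟨S, eventually_of_mem ((isOpen_setOf_norm_comp_sub_lt P hT S).mem_nhds hz)
    fun y hy => ⟨hS, hy⟩⟩

theorem IsCompact.exists_continuousOn_forall_comp_sub_lt [R1Space Z] {s : Set Z}
    (hs : IsCompact s) (hT : ContinuousOn T s) (hD : Monotone D)
    (hloc : ∀ z ∈ s, ∃ M, ∃ S : G →L[ℝ] E, (∀ h, S h ∈ D M) ∧ ‖T z ∘L S - P‖ < κ) :
    ∃ (M : ℕ) (C : ℝ), 0 < C ∧ ∃ R : Z → G →L[ℝ] E, ContinuousOn R s ∧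
      ∀ z ∈ s, (∀ h, R z h ∈ D M) ∧ ‖R z‖ ≤ C ∧ ‖T z ∘L R z - P‖ < κ := by
  classical
  have : CompactSpace s := isCompact_iff_compactSpace.1 hs
  obtain ⟨M, hM⟩ := exists_index_forall_exists_comp_sub_lt P hT.domRestrict hD fun z => hloc z z.2
  obtain ⟨R, hR⟩ := exists_continuous_forall_comp_sub_lt P hT.domRestrict hM
  obtain ⟨C, hC⟩ := (isCompact_range R.continuous).isBounded.exists_norm_le
  refine ⟨M, max C 1, by positivity, fun z => if hz : z ∈ s then R ⟨z, hz⟩ else 0, ?_,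
    fun z hz => ?_⟩
  · rw [continuousOn_iff_continuous_domRestrict]
    convert R.continuous using 1
    ext z : 1
    simp [z.2]
  · obtain ⟨hRD, hRT⟩ := hR ⟨z, hz⟩
    simp only [dif_pos hz]
    exact ⟨hRD, (hC _ (mem_range_self _)).trans (le_max_left _ _), hRT⟩

end Gluing

theorem norm_comp_sub_le {V H : Type*} [NormedAddCommGroup V] [NormedSpace ℝ V]
    [NormedAddCommGroup H] [NormedSpace ℝ H] (ι : V →L[ℝ] H) (B P : H →L[ℝ] H) :
    ‖B ∘L ι - ι‖ ≤ ‖B - P‖ * ‖ι‖ + ‖ι - P ∘L ι‖ := by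
  have : B ∘L ι - ι = (B - P) ∘L ι - (ι - P ∘L ι) := by
    rw [sub_comp]; abel
  rw [this]
  calc ‖(B - P) ∘L ι - (ι - P ∘L ι)‖ ≤ ‖(B - P) ∘L ι‖ + ‖ι - P ∘L ι‖ := norm_sub_le _ _
    _ ≤ ‖B - P‖ * ‖ι‖ + ‖ι - P ∘L ι‖ := by gcongr; exact opNorm_comp_le _ _

theorem stmt_6_general {H E V : Type*}
    [NormedAddCommGroup H] [InnerProductSpace ℝ H]
    [NormedAddCommGroup E] [InnerProductSpace ℝ E]
    [NormedAddCommGroup V] [NormedSpace ℝ V]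
    (ι : V →L[ℝ] H) (hι_compact : IsCompactOperator ι)
    (e : HilbertBasis ℕ ℝ E)
    (X : Set H) (K : Set E) (hX : IsCompact X) (hK : IsCompact K)
    (A : H × E → E →L[ℝ] H)
    (hAcont : ContinuousOn A (X ×ˢ K))
    (hAdense : ∀ u ∈ X, ∀ η ∈ K, DenseRange (A (u, η))) :
    ∀ ε : ℝ, 0 < ε →
      ∃ (M : ℕ) (C : ℝ), 0 < C ∧
        ∃ Rε : H × E → H →L[ℝ] E,
          ContinuousOn Rε (X ×ˢ K) ∧
          (∀ u ∈ X, ∀ η ∈ K,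
            (∀ f : H, Rε (u, η) f ∈
                Submodule.span ℝ (e '' {j : ℕ | j < M})) ∧
            ‖Rε (u, η)‖ ≤ C ∧
            (∀ f : V, ‖A (u, η) (Rε (u, η) (ι f)) - ι f‖ ≤ ε * ‖f‖)) := by
  intro ε hε
  obtain ⟨W, _, hW⟩ := hι_compact.exists_norm_sub_starProjection_comp_le (half_pos hε)
  set κ := ε / 2 / (‖ι‖ + 1)
  have hκ : κ * ‖ι‖ ≤ ε / 2 := by
    rw [div_mul_eq_mul_div, div_le_iff₀ (by positivity)]
    gcongr; linarith
  have hloc : ∀ q ∈ X ×ˢ K, ∃ M, ∃ S : H →L[ℝ] E,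
      (∀ h, S h ∈ span ℝ (e '' {j | j < M})) ∧ ‖A q ∘L S - W.starProjection‖ < κ := by
    rintro ⟨u, η⟩ ⟨hu, hη⟩
    rw [(stdOrthonormalBasis ℝ W).starProjection_eq_sum_rankOne]
    exact exists_comp_sub_sum_rankOne_lt (hAdense u hu η hη) (monotone_span_image_setOf_lt e)
      e.dense_iUnion_span_image_lt _ _ (by positivity)
  obtain ⟨M, C, hC, R, hRcont, hR⟩ := (hX.prod hK).exists_continuousOn_forall_comp_sub_lt
    W.starProjection hAcont (monotone_span_image_setOf_lt e) hloc
  refine ⟨M, C, hC, R, hRcont, fun u hu η hη => ?_⟩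
  obtain ⟨hRspan, hRC, hRA⟩ := hR (u, η) ⟨hu, hη⟩
  refine ⟨hRspan, hRC, fun f => ?_⟩
  calc ‖A (u, η) (R (u, η) (ι f)) - ι f‖ = ‖((A (u, η) ∘L R (u, η)) ∘L ι - ι) f‖ := rfl
    _ ≤ ‖(A (u, η) ∘L R (u, η)) ∘L ι - ι‖ * ‖f‖ := le_opNorm _ _
    _ ≤ (κ * ‖ι‖ + ε / 2) * ‖f‖ := by
        gcongr
        refine (norm_comp_sub_le ι _ W.starProjection).trans ?_
        gcongr
    _ ≤ ε * ‖f‖ := by gcongr; linarith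

/-- approximate right inverses, continuous in parameters, with finite
dimensional range. `ι : V → H` is the compact dense embedding of the Banach space `V`
into `H`, `e` is a Hilbert basis of `E`, and `E_M` is the span of `e 0, …, e (M-1)`. -/
theorem stmt_6 {H E V : Type*}
    [NormedAddCommGroup H] [InnerProductSpace ℝ H] [CompleteSpace H]
    [SecondCountableTopology H]
    [NormedAddCommGroup E] [InnerProductSpace ℝ E] [CompleteSpace E]
    [SecondCountableTopology E]
    [NormedAddCommGroup V] [NormedSpace ℝ V] [CompleteSpace V]
    (ι : V →L[ℝ] H) (hι_dense : DenseRange ι) (hι_compact : IsCompactOperator ι)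
    (e : HilbertBasis ℕ ℝ E)
    (X : Set H) (K : Set E) (hX : IsCompact X) (hK : IsCompact K)
    (A : H × E → E →L[ℝ] H)
    (hAcont : ContinuousOn A (X ×ˢ K))
    (hAdense : ∀ u ∈ X, ∀ η ∈ K, DenseRange (A (u, η))) :
    ∀ ε : ℝ, 0 < ε →
      ∃ (M : ℕ) (C : ℝ), 0 < C ∧
        ∃ Rε : H × E → H →L[ℝ] E,
          ContinuousOn Rε (X ×ˢ K) ∧
          (∀ u ∈ X, ∀ η ∈ K,
            (∀ f : H, Rε (u, η) f ∈
                Submodule.span ℝ (e '' {j : ℕ | j < M})) ∧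
            ‖Rε (u, η)‖ ≤ C ∧
            (∀ f : V, ‖A (u, η) (Rε (u, η) (ι f)) - ι f‖ ≤ ε * ‖f‖)) :=
  stmt_6_general ι hι_compact e X K hX hK A hAcont hAdense
end

section
/- Let ρ : ℝ^M → ℝ be a Lipschitz probability density supported on a compact set, and let Ξ = id + Φ where Φ : ℝ^M → ℝ^M is Lipschitz with Lip(Φ) ≤ 1/2 and sup‖Φ‖ ≤ δ, both bounded by c·d for some d > 0. Then the total variation distance between the measure ρ(v)dv and its pushforward under Ξ is bounded by C·d, where C depends only on ρ, M, and c. -/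
/-!
By Rademacher's theorem `Ξ = id + Φ` is differentiable almost everywhere; it is bijective because
`Φ` is a contraction, and Lipschitz maps send null sets to null sets. Hence the change of
variables formula applies to `Ξ` and gives, for every Borel set `A`,
`(ρ dv)(A) = ∫_{Ξ⁻¹A} |det DΞ| · ρ ∘ Ξ` and `(Ξ_* ρ dv)(A) = ∫_{Ξ⁻¹A} ρ`.
Since `det` is `C¹`, `|det (1 + DΦ) - 1| ≤ K ‖DΦ‖ ≤ K Lip(Φ)`, and `|ρ ∘ Ξ - ρ| ≤ Lip(ρ) sup ‖Φ‖`,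
so the two integrands differ by `O(c d)`, and only on the `sup ‖Φ‖`-neighbourhood of `supp ρ`,
whose volume is bounded once `c d ≤ 1`. When `c d > 1` the trivial bound `1` suffices.
-/

open MeasureTheory NNReal ENNReal Function Metric

theorem ContinuousLinearMap.contDiff_det {F : Type*} [NormedAddCommGroup F] [NormedSpace ℝ F]
    [FiniteDimensional ℝ F] {n : WithTop ℕ∞} :
    ContDiff ℝ n fun B : F →L[ℝ] F => B.det := by
  let b := Module.finBasis ℝ F
  let entry (i j : Fin (Module.finrank ℝ F)) : (F →L[ℝ] F) →ₗ[ℝ] ℝ :=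
    Matrix.entryLinearMap ℝ ℝ i j ∘ₗ (LinearMap.toMatrix b b).toLinearMap ∘ₗ
      ContinuousLinearMap.coeLM ℝ
  have hdet : (fun B : F →L[ℝ] F => B.det) =
      fun B => ∑ σ : Equiv.Perm _, ((σ.sign : ℤ) : ℝ) * ∏ i, entry (σ i) i B := by
    ext B
    rw [ContinuousLinearMap.det, ← LinearMap.det_toMatrix b, Matrix.det_apply']
    rfl
  rw [hdet]
  exact ContDiff.sum fun σ _ => contDiff_const.mul <|
    contDiff_prod fun i _ => (entry (σ i) i).toContinuousLinearMap.contDiff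

theorem exists_abs_det_id_add_sub_one_le (F : Type*) [NormedAddCommGroup F] [NormedSpace ℝ F]
    [FiniteDimensional ℝ F] (r : ℝ) :
    ∃ K : ℝ≥0, ∀ B : F →L[ℝ] F, ‖B‖ ≤ r →
      |(ContinuousLinearMap.id ℝ F + B).det - 1| ≤ K * ‖B‖ := by
  have hsmooth : ContDiff ℝ 1 fun B : F →L[ℝ] F => (ContinuousLinearMap.id ℝ F + B).det :=
    ContinuousLinearMap.contDiff_det.comp (contDiff_const.add contDiff_id)
  obtain ⟨K, hK⟩ := hsmooth.contDiffOn.exists_lipschitzOnWith one_ne_zero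
    (convex_closedBall 0 r) (isCompact_closedBall 0 r)
  refine ⟨K, fun B hB => ?_⟩
  have h0 : (0 : F →L[ℝ] F) ∈ closedBall 0 r := mem_closedBall_self ((norm_nonneg B).trans hB)
  simpa [Real.dist_eq, ContinuousLinearMap.det] using
    hK.dist_le_mul B (mem_closedBall_zero_iff.2 hB) 0 h0

theorem bijective_add_of_lipschitzWith {E : Type*} [NormedAddCommGroup E] [CompleteSpace E]
    {Φ : E → E} {L : ℝ≥0} (hΦ : LipschitzWith L Φ) (hL : L < 1) :
    Bijective fun x => x + Φ x := by
  refine ⟨(AntilipschitzWith.id.add_lipschitzWith hΦ (by simpa using hL)).injective,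
    fun y => ?_⟩
  have hcontr : ContractingWith L fun x => y - Φ x :=
    ⟨hL, by simpa using (LipschitzWith.const y).sub hΦ⟩
  obtain ⟨x, hx, -⟩ := hcontr.exists_fixedPoint y (edist_ne_top _ _)
  exact ⟨x, (sub_eq_iff_eq_add.1 hx.eq).symm⟩

theorem abs_abs_mul_sub_le (a p q : ℝ) : |(|a| * p - q)| ≤ |a - 1| * |p| + |p - q| :=
  calc |(|a| * p - q)| = |(|a| - 1) * p + (p - q)| := by ring_nf
    _ ≤ |(|a| - 1) * p| + |p - q| := abs_add_le _ _
    _ ≤ |a - 1| * |p| + |p - q| := by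
      have h := abs_abs_sub_abs_le_abs_sub a 1
      rw [abs_one] at h
      rw [abs_mul]
      linarith [mul_le_mul_of_nonneg_right h (abs_nonneg p)]

theorem apply_eq_zero_of_notMem_cthickening_tsupport {X M : Type*} [PseudoMetricSpace X]
    [Zero M] {ρ : X → M} {δ : ℝ} {x y : X} (hx : x ∉ cthickening δ (tsupport ρ))
    (hxy : dist x y ≤ δ) : ρ y = 0 :=
  image_eq_zero_of_notMem_tsupport fun hy => hx (mem_cthickening_of_dist_le x y δ _ hy hxy)

theorem ENNReal.abs_toReal_sub_le_of_le_add {a b : ℝ≥0∞} {ε : ℝ} (ha : a ≠ ∞) (hb : b ≠ ∞)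
    (hε : 0 ≤ ε) (hab : a ≤ b + ENNReal.ofReal ε) (hba : b ≤ a + ENNReal.ofReal ε) :
    |a.toReal - b.toReal| ≤ ε := by
  have h₁ := ENNReal.toReal_mono (by finiteness) hab
  have h₂ := ENNReal.toReal_mono (by finiteness) hba
  rw [ENNReal.toReal_add hb ofReal_ne_top, ENNReal.toReal_ofReal hε] at h₁
  rw [ENNReal.toReal_add ha ofReal_ne_top, ENNReal.toReal_ofReal hε] at h₂
  exact abs_sub_le_iff.2 ⟨by linarith, by linarith⟩

section MeasureSpace

variable {α : Type*} [MeasurableSpace α]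

theorem lintegral_ofReal_le_lintegral_ofReal_add {μ : Measure α} {f g h : α → ℝ}
    (hh : Measurable h) (hfg : ∀ᵐ x ∂μ, f x ≤ g x + h x) :
    ∫⁻ x, ENNReal.ofReal (f x) ∂μ ≤
      ∫⁻ x, ENNReal.ofReal (g x) ∂μ + ∫⁻ x, ENNReal.ofReal (h x) ∂μ := by
  rw [← lintegral_add_right' _ hh.ennreal_ofReal.aemeasurable]
  exact lintegral_mono_ae <| hfg.mono fun x hx =>
    (ENNReal.ofReal_le_ofReal hx).trans ENNReal.ofReal_add_le

theorem setLIntegral_ofReal_indicator_const_le (μ : Measure α) {S : Set α}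
    (hS : MeasurableSet S) (hS_fin : μ S ≠ ∞) {ε : ℝ} (hε : 0 ≤ ε) (T : Set α) :
    ∫⁻ x in T, ENNReal.ofReal (S.indicator (fun _ => ε) x) ∂μ ≤
      ENNReal.ofReal (ε * (μ S).toReal) :=
  calc _ ≤ ∫⁻ x, ENNReal.ofReal (S.indicator (fun _ => ε) x) ∂μ :=
        setLIntegral_le_lintegral _ _
    _ = ∫⁻ x, S.indicator (fun _ => ENNReal.ofReal ε) x ∂μ :=
        lintegral_congr fun x => by by_cases hx : x ∈ S <;> simp [hx]
    _ = _ := by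
        rw [lintegral_indicator_const hS, ENNReal.ofReal_mul hε, ENNReal.ofReal_toReal hS_fin]

theorem abs_toReal_measure_sub_le_one (μ ν : Measure α) [IsProbabilityMeasure μ]
    [IsProbabilityMeasure ν] (s : Set α) : |(μ s).toReal - (ν s).toReal| ≤ 1 := by
  change |μ.real s - ν.real s| ≤ 1
  have := measureReal_nonneg (μ := μ) (s := s)
  have := measureReal_nonneg (μ := ν) (s := s)
  have := measureReal_le_one (μ := μ) (s := s)
  have := measureReal_le_one (μ := ν) (s := s)
  exact abs_sub_le_iff.2 ⟨by linarith, by linarith⟩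

end MeasureSpace

section PerturbationOfIdentity

variable {E : Type*} [NormedAddCommGroup E] [NormedSpace ℝ E]
  {ρ : E → ℝ} {Φ : E → E} {Lρ L K : ℝ≥0} {B δ : ℝ}

theorem abs_abs_det_fderiv_add_mul_sub_le (hρ : LipschitzWith Lρ ρ) (hρB : ∀ v, |ρ v| ≤ B)
    (hΦ : LipschitzWith L Φ) (hΦδ : ∀ v, ‖Φ v‖ ≤ δ)
    (hK : ∀ T : E →L[ℝ] E, ‖T‖ ≤ L → |(ContinuousLinearMap.id ℝ E + T).det - 1| ≤ K * ‖T‖)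
    {x : E} (hx : DifferentiableAt ℝ Φ x) :
    |(|(fderiv ℝ (fun v => v + Φ v) x).det| * ρ (x + Φ x) - ρ x)| ≤ K * L * B + Lρ * δ := by
  have hderiv : fderiv ℝ (fun v => v + Φ v) x = ContinuousLinearMap.id ℝ E + fderiv ℝ Φ x :=
    ((hasFDerivAt_id x).add hx.hasFDerivAt).fderiv
  have hT : ‖fderiv ℝ Φ x‖ ≤ L := norm_fderiv_le_of_lipschitz ℝ hΦ
  have hdet : |(fderiv ℝ (fun v => v + Φ v) x).det - 1| ≤ K * L := by
    rw [hderiv]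
    exact (hK _ hT).trans (mul_le_mul_of_nonneg_left hT K.coe_nonneg)
  have hρΦ : |ρ (x + Φ x) - ρ x| ≤ Lρ * δ := by
    calc |ρ (x + Φ x) - ρ x| ≤ Lρ * dist (x + Φ x) x := by
          simpa [Real.dist_eq] using hρ.dist_le_mul (x + Φ x) x
      _ ≤ Lρ * δ := by
          rw [dist_eq_norm, add_sub_cancel_left]
          exact mul_le_mul_of_nonneg_left (hΦδ x) Lρ.coe_nonneg
  calc _ ≤ |(fderiv ℝ (fun v => v + Φ v) x).det - 1| * |ρ (x + Φ x)| + |ρ (x + Φ x) - ρ x| :=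
        abs_abs_mul_sub_le _ _ _
    _ ≤ K * L * B + Lρ * δ :=
        add_le_add (mul_le_mul hdet (hρB _) (abs_nonneg _) (by positivity)) hρΦ

variable [FiniteDimensional ℝ E] [MeasurableSpace E] [BorelSpace E] (μ : Measure E)
  [μ.IsAddHaarMeasure]

theorem LipschitzWith.addHaar_image_eq_zero {C : ℝ≥0} {f : E → E} (hf : LipschitzWith C f)
    {s : Set E} (hs : μ s = 0) : μ (f '' s) = 0 := by
  have hμ : μ ≪ μH[Module.finrank ℝ E] := Measure.absolutelyContinuous_isAddHaarMeasure _ _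
  have hH : μH[Module.finrank ℝ E] ≪ μ := Measure.absolutelyContinuous_isAddHaarMeasure _ _
  apply hμ
  refine le_antisymm ((hf.hausdorffMeasure_image_le (by positivity) s).trans ?_) bot_le
  rw [hH hs, mul_zero]

theorem LipschitzWith.setLIntegral_eq_setLIntegral_preimage_abs_det_fderiv_mul {C : ℝ≥0}
    {f : E → E} (hf : LipschitzWith C f) (hbij : Bijective f) {A : Set E}
    (hA : MeasurableSet A) (g : E → ℝ≥0∞) :
    ∫⁻ y in A, g y ∂μ =
      ∫⁻ x in f ⁻¹' A, ENNReal.ofReal |(fderiv ℝ f x).det| * g (f x) ∂μ := by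
  set D : Set E := {x | DifferentiableAt ℝ f x}
  have hD : D =ᵐ[μ] (Set.univ : Set E) := ae_eq_univ.2 (ae_iff.1 hf.ae_differentiableAt)
  have hT : MeasurableSet (D ∩ f ⁻¹' A) :=
    (measurableSet_of_differentiableAt ℝ f).inter (hf.continuous.measurable hA)
  have himage : f '' (D ∩ f ⁻¹' A) =ᵐ[μ] A := by
    refine ae_eq_set.2 ⟨?_, measure_mono_null ?_ (hf.addHaar_image_eq_zero μ (ae_eq_univ.1 hD))⟩
    · rw [Set.sdiff_eq_empty.2 (Set.image_subset_iff.2 Set.inter_subset_right), measure_empty]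
    · rintro y ⟨hyA, hy⟩
      obtain ⟨x, rfl⟩ := hbij.surjective y
      exact ⟨x, fun hx => hy ⟨x, ⟨hx, hyA⟩, rfl⟩, rfl⟩
  have hpreimage : (D ∩ f ⁻¹' A : Set E) =ᵐ[μ] f ⁻¹' A := by
    simpa using hD.inter (ae_eq_refl (f ⁻¹' A))
  calc ∫⁻ y in A, g y ∂μ = ∫⁻ y in f '' (D ∩ f ⁻¹' A), g y ∂μ :=
        setLIntegral_congr himage.symm
    _ = ∫⁻ x in D ∩ f ⁻¹' A, ENNReal.ofReal |(fderiv ℝ f x).det| * g (f x) ∂μ :=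
        lintegral_image_eq_lintegral_abs_det_fderiv_mul μ hT
          (fun x hx => hx.1.hasFDerivAt.hasFDerivWithinAt) hbij.injective.injOn g
    _ = _ := setLIntegral_congr hpreimage

theorem ae_abs_abs_det_fderiv_add_mul_sub_le_indicator (hρ : LipschitzWith Lρ ρ)
    (hρB : ∀ v, |ρ v| ≤ B) (hΦ : LipschitzWith L Φ) (hΦδ : ∀ v, ‖Φ v‖ ≤ δ)
    (hK : ∀ T : E →L[ℝ] E, ‖T‖ ≤ L → |(ContinuousLinearMap.id ℝ E + T).det - 1| ≤ K * ‖T‖) :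
    ∀ᵐ x ∂μ, |(|(fderiv ℝ (fun v => v + Φ v) x).det| * ρ (x + Φ x) - ρ x)| ≤
      (cthickening δ (tsupport ρ)).indicator (fun _ => K * L * B + Lρ * δ) x := by
  filter_upwards [hΦ.ae_differentiableAt] with x hx
  by_cases hxS : x ∈ cthickening δ (tsupport ρ)
  · rw [Set.indicator_of_mem hxS]
    exact abs_abs_det_fderiv_add_mul_sub_le hρ hρB hΦ hΦδ hK hx
  · have hδ : 0 ≤ δ := (norm_nonneg _).trans (hΦδ x)
    have hρx : ρ x = 0 := apply_eq_zero_of_notMem_cthickening_tsupport hxS (by simpa using hδ)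
    have hρΦx : ρ (x + Φ x) = 0 := apply_eq_zero_of_notMem_cthickening_tsupport hxS
      (by simpa [dist_eq_norm] using hΦδ x)
    simp [Set.indicator_of_notMem hxS, hρx, hρΦx]

theorem abs_toReal_withDensity_sub_map_add_le (hρ : LipschitzWith Lρ ρ)
    (hρ_supp : HasCompactSupport ρ) (hρB : ∀ v, |ρ v| ≤ B)
    [IsFiniteMeasure (μ.withDensity fun v => ENNReal.ofReal (ρ v))]
    (hΦ : LipschitzWith L Φ) (hL : L < 1) (hΦδ : ∀ v, ‖Φ v‖ ≤ δ)
    (hK : ∀ T : E →L[ℝ] E, ‖T‖ ≤ L → |(ContinuousLinearMap.id ℝ E + T).det - 1| ≤ K * ‖T‖)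
    {A : Set E} (hA : MeasurableSet A) :
    |((μ.withDensity fun v => ENNReal.ofReal (ρ v)) A).toReal -
      (((μ.withDensity fun v => ENNReal.ofReal (ρ v)).map fun v => v + Φ v) A).toReal| ≤
      (K * L * B + Lρ * δ) * (μ (cthickening δ (tsupport ρ))).toReal := by
  set Ξ : E → E := fun v => v + Φ v
  set S := cthickening δ (tsupport ρ)
  set ε := K * L * B + Lρ * δ
  have hΞ : LipschitzWith (1 + L) Ξ := LipschitzWith.id.add hΦ
  have hε : 0 ≤ ε := by
    have := (abs_nonneg _).trans (hρB 0)
    have := (norm_nonneg _).trans (hΦδ 0)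
    positivity
  have hdensity : (μ.withDensity fun v => ENNReal.ofReal (ρ v)) A =
      ∫⁻ x in Ξ ⁻¹' A, ENNReal.ofReal (|(fderiv ℝ Ξ x).det| * ρ (Ξ x)) ∂μ := by
    simp_rw [ENNReal.ofReal_mul (abs_nonneg _)]
    rw [withDensity_apply _ hA]
    exact hΞ.setLIntegral_eq_setLIntegral_preimage_abs_det_fderiv_mul μ
      (bijective_add_of_lipschitzWith hΦ hL) hA _
  have hmap : ((μ.withDensity fun v => ENNReal.ofReal (ρ v)).map Ξ) A =
      ∫⁻ x in Ξ ⁻¹' A, ENNReal.ofReal (ρ x) ∂μ := by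
    rw [Measure.map_apply hΞ.continuous.measurable hA,
      withDensity_apply _ (hΞ.continuous.measurable hA)]
  have hle {f g : E → ℝ} (hfg : ∀ᵐ x ∂μ, f x ≤ g x + S.indicator (fun _ => ε) x) :
      ∫⁻ x in Ξ ⁻¹' A, ENNReal.ofReal (f x) ∂μ ≤
        ∫⁻ x in Ξ ⁻¹' A, ENNReal.ofReal (g x) ∂μ + ENNReal.ofReal (ε * (μ S).toReal) :=
    (lintegral_ofReal_le_lintegral_ofReal_add
      (measurable_const.indicator isClosed_cthickening.measurableSet)
      (ae_restrict_of_ae hfg)).trans <| add_le_add_right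
        (setLIntegral_ofReal_indicator_const_le μ isClosed_cthickening.measurableSet
          hρ_supp.cthickening.measure_lt_top.ne hε _) _
  have hbound := ae_abs_abs_det_fderiv_add_mul_sub_le_indicator μ hρ hρB hΦ hΦδ hK
  refine ENNReal.abs_toReal_sub_le_of_le_add (measure_ne_top _ _) (measure_ne_top _ _)
    (by positivity) ?_ ?_ <;> rw [hdensity, hmap] <;> refine hle (hbound.mono fun x hx => ?_)
  · linarith [(abs_le.1 hx).2]
  · linarith [(abs_le.1 hx).1]

end PerturbationOfIdentity

theorem stmt_12_general (M : ℕ) (ρ : EuclideanSpace ℝ (Fin M) → ℝ)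
    (hρ_lip : ∃ Lρ : ℝ≥0, LipschitzWith Lρ ρ)
    (hρ_supp : HasCompactSupport ρ)
    (hρ_prob : IsProbabilityMeasure
      (volume.withDensity fun v => ENNReal.ofReal (ρ v)))
    (c : ℝ) (hc : 0 < c) :
    ∃ C : ℝ, 0 < C ∧
      ∀ d : ℝ, 0 < d →
        ∀ Φ : EuclideanSpace ℝ (Fin M) → EuclideanSpace ℝ (Fin M),
          (∃ L : ℝ≥0, LipschitzWith L Φ ∧ (L : ℝ) ≤ 1 / 2 ∧ (L : ℝ) ≤ c * d) →
          (∀ v, ‖Φ v‖ ≤ c * d) →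
          ∀ A : Set (EuclideanSpace ℝ (Fin M)), MeasurableSet A →
            |((volume.withDensity fun v => ENNReal.ofReal (ρ v)) A).toReal -
              (((volume.withDensity fun v => ENNReal.ofReal (ρ v)).map
                (fun v => v + Φ v)) A).toReal| ≤ C * d := by
  obtain ⟨Lρ, hρ⟩ := hρ_lip
  obtain ⟨B, hB⟩ := hρ_supp.exists_bound_of_continuous hρ.continuous
  obtain ⟨K, hK⟩ := exists_abs_det_id_add_sub_one_le (EuclideanSpace ℝ (Fin M)) (1 / 2)
  set V := (volume (cthickening 1 (tsupport ρ))).toReal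
  have hB0 : 0 ≤ B := (norm_nonneg _).trans (hB 0)
  refine ⟨c + (K * B + Lρ) * c * V, by positivity,
    fun d hd Φ ⟨L, hΦ, hL, hLd⟩ hΦd A hA => ?_⟩
  have hCd : 0 ≤ (K * B + Lρ) * c * V * d := by positivity
  rcases le_or_gt (c * d) 1 with hcd | hcd
  · calc _ ≤ (K * L * B + Lρ * (c * d)) *
          (volume (cthickening (c * d) (tsupport ρ))).toReal :=
          abs_toReal_withDensity_sub_map_add_le volume hρ hρ_supp (fun v => by simpa using hB v) hΦ
            (by exact_mod_cast hL.trans_lt one_half_lt_one) hΦd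
            (fun T hT => hK T (hT.trans hL)) hA
      _ ≤ (K * (c * d) * B + Lρ * (c * d)) * V := by
          gcongr
          exact ENNReal.toReal_mono hρ_supp.cthickening.measure_lt_top.ne
            (measure_mono (cthickening_mono hcd _))
      _ ≤ (c + (K * B + Lρ) * c * V) * d := by nlinarith
  · have : IsProbabilityMeasure ((volume.withDensity fun v => ENNReal.ofReal (ρ v)).map
        fun v => v + Φ v) :=
      Measure.isProbabilityMeasure_map (continuous_id.add hΦ.continuous).aemeasurable
    calc _ ≤ 1 := abs_toReal_measure_sub_le_one _ _ A
      _ ≤ c * d := hcd.le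
      _ ≤ (c + (K * B + Lρ) * c * V) * d := by nlinarith

/-- for a compactly supported Lipschitz probability density `ρ` on
`ℝ^M`, the total variation distance between `ρ dv` and its pushforward under
`Ξ = id + Φ` is `≤ C·d`, where `Lip(Φ) ≤ min(1/2, c·d)` and `sup‖Φ‖ ≤ c·d`, with
`C` depending only on `ρ`, `M`, `c`. -/
theorem stmt_12 (M : ℕ) (ρ : EuclideanSpace ℝ (Fin M) → ℝ)
    (hρ_lip : ∃ Lρ : ℝ≥0, LipschitzWith Lρ ρ)
    (hρ_supp : HasCompactSupport ρ)
    (hρ_nonneg : ∀ v, 0 ≤ ρ v)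
    (hρ_prob : IsProbabilityMeasure
      (volume.withDensity fun v => ENNReal.ofReal (ρ v)))
    (c : ℝ) (hc : 0 < c) :
    ∃ C : ℝ, 0 < C ∧
      ∀ d : ℝ, 0 < d →
        ∀ Φ : EuclideanSpace ℝ (Fin M) → EuclideanSpace ℝ (Fin M),
          (∃ L : ℝ≥0, LipschitzWith L Φ ∧ (L : ℝ) ≤ 1 / 2 ∧ (L : ℝ) ≤ c * d) →
          (∀ v, ‖Φ v‖ ≤ c * d) →
          ∀ A : Set (EuclideanSpace ℝ (Fin M)), MeasurableSet A →
            |((volume.withDensity fun v => ENNReal.ofReal (ρ v)) A).toReal -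
              (((volume.withDensity fun v => ENNReal.ofReal (ρ v)).map
                (fun v => v + Φ v)) A).toReal| ≤ C * d :=
  stmt_12_general M ρ hρ_lip hρ_supp hρ_prob c hc
end
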